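/- Let N ≥ 1 be an integer and let F(x₁,x₂) = Σ_{k=1}^N e(k x₁/N + k² x₂/N²), where e(z) = e^{2πiz}. Let q, a, b be integers with q odd, 1 ≤ b ≤ q ≤ N^{2/3}, gcd(b,q) = 1, and 0 ≤ a ≤ q, and let M(q,a,b) = {(x₁,x₂) ∈ [0,N] × [0,N²] : |x₁ − (a/q)N| ≤ 10^{-10} and |x₂ − (b/q)N²| ≤ 10^{-10}}. Then for every (x₁,x₂) ∈ M(q,a,b), (1/4)·N q^{-1/2} ≤ |F(x₁,x₂)| ≤ 4·N q^{-1/2}. -/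

import Mathlib

open Set

noncomputable section

/-- `e(z) = e^{2πiz}` -/
def e2 (z : ℝ) : ℂ := Complex.exp (2 * Real.pi * Complex.I * z)

/-- The exponential sum `F(x₁,x₂) = Σ_{k=1}^N e(k x₁/N + k² x₂/N²)`. -/
def Fsum (N : ℕ) (p : ℝ × ℝ) : ℂ :=
  ∑ k ∈ Finset.Icc 1 N, e2 ((k : ℝ) * p.1 / N + (k : ℝ) ^ 2 * p.2 / (N : ℝ) ^ 2)

/-- The major arc box `M(q,a,b)` in `[0,N] × [0,N²]`. -/
def Mqab (N : ℝ) (q a b : ℤ) : Set (ℝ × ℝ) :=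
  {p | p ∈ Icc ((0 : ℝ), (0 : ℝ)) (N, N ^ 2) ∧
    |p.1 - ((a : ℝ) / (q : ℝ)) * N| ≤ ((10 : ℝ) ^ 10)⁻¹ ∧
    |p.2 - ((b : ℝ) / (q : ℝ)) * N ^ 2| ≤ ((10 : ℝ) ^ 10)⁻¹}

def condQAB (N : ℝ) (q a b : ℤ) : Prop :=
  Odd q ∧ 1 ≤ b ∧ b ≤ q ∧ (q : ℝ) ≤ N ^ ((2 : ℝ)/3) ∧ Int.gcd b q = 1 ∧ 0 ≤ a ∧ a ≤ q

/-!
Write `p = (a N / q + d₁, b N² / q + d₂)`. Then `F(p)` is the sum `∑ e((a k + b k²)/q)`,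
twisted by the slowly varying phase `e(k d₁/N + k² d₂/N²)` with `|dᵢ| ≤ 10⁻¹⁰`.

Over one period, the sum has modulus exactly `√q`, because `2b` is a unit mod `q`. Hence, if
`N = m q + r`, its `N`-th partial sum is `(m + 1/2)` complete sums up to an error of `q / 2`:
compare the incomplete block of `r` terms both with `0` and with a full period. Summation by
parts shows that the twist moves the sum by at most `N / (50 √q)`, since the partial sums are
`O(N/√q)` and the twist has total variation `O(10⁻¹⁰)`. Finally `q^{3/2} ≤ N`, so both errors
fit inside the factor `4`.
-/

open Finset Real

theorem Function.Periodic.sum_range_mul_add {M : Type*} [AddCommMonoid M] {c : ℕ → M} {Q : ℕ}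
    (hc : Function.Periodic c Q) (m r : ℕ) :
    ∑ k ∈ range (Q * m + r), c k = m • ∑ k ∈ range Q, c k + ∑ k ∈ range r, c k := by
  induction m with
  | zero => simp
  | succ m ih =>
    rw [show Q * (m + 1) + r = Q + (Q * m + r) by ring, sum_range_add]
    simp only [add_comm Q, hc _, ih, succ_nsmul']
    abel

theorem Function.Periodic.norm_sum_range_sub_le {E : Type*} [SeminormedAddCommGroup E]
    [NormedSpace ℝ E] {c : ℕ → E} {Q : ℕ} (hQ : 0 < Q) (hc : Function.Periodic c Q)
    (hc1 : ∀ k, ‖c k‖ ≤ 1) (n : ℕ) :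
    ‖∑ k ∈ range n, c k - ((n / Q : ℕ) + 1 / 2 : ℝ) • ∑ k ∈ range Q, c k‖ ≤ Q / 2 := by
  set r := n % Q
  have hrQ : r ≤ Q := (Nat.mod_lt n hQ).le
  have hhead : ‖∑ k ∈ range r, c k‖ ≤ r := by
    simpa using norm_sum_le_of_le (range r) fun k _ => hc1 k
  have htail : ‖∑ k ∈ range r, c k - ∑ k ∈ range Q, c k‖ ≤ Q - r := by
    rw [norm_sub_rev, ← sum_Ico_eq_sub _ hrQ]
    simpa [Nat.cast_sub hrQ] using norm_sum_le_of_le (Ico r Q) fun k _ => hc1 k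
  have hdecomp : ∑ k ∈ range n, c k = (n / Q) • ∑ k ∈ range Q, c k + ∑ k ∈ range r, c k := by
    rw [← hc.sum_range_mul_add, Nat.div_add_mod]
  have hsplit : ∑ k ∈ range n, c k - ((n / Q : ℕ) + 1 / 2 : ℝ) • ∑ k ∈ range Q, c k
      = (1 / 2 : ℝ) • (∑ k ∈ range r, c k + (∑ k ∈ range r, c k - ∑ k ∈ range Q, c k)) := by
    rw [hdecomp, add_smul, ← Nat.cast_smul_eq_nsmul ℝ]
    module
  rw [hsplit, norm_smul, Real.norm_of_nonneg (by norm_num)]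
  linarith [norm_add_le (∑ k ∈ range r, c k) (∑ k ∈ range r, c k - ∑ k ∈ range Q, c k)]

theorem sum_range_smul_eq_by_parts {R M : Type*} [Ring R] [AddCommGroup M] [Module R M]
    (v : ℕ → R) (c : ℕ → M) (n : ℕ) :
    ∑ k ∈ range n, v k • c k = v n • ∑ k ∈ range n, c k
      - ∑ k ∈ range n, (v (k + 1) - v k) • ∑ j ∈ range (k + 1), c j := by
  induction n with
  | zero => simp
  | succ n ih =>
    rw [sum_range_succ, ih, sum_range_succ _ n, sum_range_succ _ n, sum_range_succ c n]
    simp only [sub_smul, smul_add]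
    abel

theorem norm_sum_range_smul_le {𝕜 E : Type*} [NormedField 𝕜] [SeminormedAddCommGroup E]
    [NormedSpace 𝕜 E] (v : ℕ → 𝕜) (c : ℕ → E) (n : ℕ) {B : ℝ}
    (hB : ∀ k ≤ n, ‖∑ j ∈ range k, c j‖ ≤ B) :
    ‖∑ k ∈ range n, v k • c k‖ ≤ B * (‖v n‖ + ∑ k ∈ range n, ‖v (k + 1) - v k‖) := by
  rw [sum_range_smul_eq_by_parts, mul_add, mul_sum]
  refine (norm_sub_le _ _).trans (add_le_add ?_ ((norm_sum_le _ _).trans (sum_le_sum ?_)))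
  · rw [norm_smul, mul_comm]
    exact mul_le_mul_of_nonneg_right (hB n le_rfl) (norm_nonneg _)
  · intro k hk
    rw [norm_smul, mul_comm]
    exact mul_le_mul_of_nonneg_right (hB (k + 1) (mem_range.mp hk)) (norm_nonneg _)

theorem ZMod.sum_range_natCast {M : Type*} [AddCommMonoid M] (Q : ℕ) [NeZero Q]
    (g : ZMod Q → M) : ∑ k ∈ range Q, g k = ∑ x, g x :=
  sum_nbij' (fun k => (k : ZMod Q)) ZMod.val (by simp) (by simp [ZMod.val_lt])
    (fun k hk => by simp_all [ZMod.val_natCast, Nat.mod_eq_of_lt]) (by simp) (by simp)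

theorem AddChar.norm_sum_quadratic_sq {R : Type*} [CommRing R] [Fintype R] [DecidableEq R]
    {ψ : AddChar R ℂ} (hψ : ψ.IsPrimitive) (a b : R) (hb : IsUnit (2 * b)) :
    ‖∑ x, ψ (a * x + b * x ^ 2)‖ ^ 2 = Fintype.card R := by
  have hdiff : ∀ y h : R, ψ (a * (y + h) + b * (y + h) ^ 2) * starRingEnd ℂ (ψ (a * y + b * y ^ 2))
      = ψ (a * h + b * h ^ 2) * ψ (y * (2 * b * h)) := by
    intro y h
    rw [← AddChar.map_neg_eq_conj, ← AddChar.map_add_eq_mul, ← AddChar.map_add_eq_mul]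
    congr 1; ring
  have hsum : ∀ h : R, ∑ y, ψ (y * (2 * b * h)) = if h = 0 then (Fintype.card R : ℂ) else 0 := by
    intro h
    rw [AddChar.sum_mulShift _ hψ]
    simp [hb.mul_right_eq_zero]
  rw [← Complex.ofReal_inj, Complex.ofReal_pow, ← Complex.mul_conj', map_sum, sum_mul_sum,
    sum_comm]
  calc ∑ y, ∑ x, ψ (a * x + b * x ^ 2) * starRingEnd ℂ (ψ (a * y + b * y ^ 2))
      = ∑ y, ∑ h, ψ (a * (y + h) + b * (y + h) ^ 2) * starRingEnd ℂ (ψ (a * y + b * y ^ 2)) :=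
        sum_congr rfl fun y _ => (Fintype.sum_equiv (Equiv.addLeft y) _ _ fun _ => rfl).symm
    _ = ∑ h, ψ (a * h + b * h ^ 2) * ∑ y, ψ (y * (2 * b * h)) := by
        simp only [hdiff, mul_sum]; exact sum_comm
    _ = Fintype.card R := by simp [hsum]

theorem e2_add (x y : ℝ) : e2 (x + y) = e2 x * e2 y := by
  rw [e2, e2, e2, ← Complex.exp_add]; push_cast; ring_nf

theorem norm_e2 (x : ℝ) : ‖e2 x‖ = 1 := by
  rw [e2, show 2 * π * Complex.I * x = (2 * π * x : ℝ) * Complex.I by push_cast; ring]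
  exact Complex.norm_exp_ofReal_mul_I _

theorem norm_e2_sub_one_le (x : ℝ) : ‖e2 x - 1‖ ≤ 2 * π * |x| := by
  have h := Real.norm_exp_I_mul_ofReal_sub_one_le (x := 2 * π * x)
  rw [Real.norm_eq_abs, abs_mul, abs_of_pos two_pi_pos] at h
  rw [e2]; convert h using 4; push_cast; ring

theorem norm_e2_sub_e2_le (x y : ℝ) : ‖e2 x - e2 y‖ ≤ 2 * π * |x - y| := by
  rw [show e2 x - e2 y = e2 y * (e2 (x - y) - 1) by rw [mul_sub, ← e2_add]; ring_nf,
    norm_mul, norm_e2, one_mul]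
  exact norm_e2_sub_one_le _

theorem e2_intCast_div (Q : ℕ) [NeZero Q] (j : ℤ) :
    e2 (j / Q) = ZMod.stdAddChar (j : ZMod Q) := by
  rw [ZMod.stdAddChar_coe, e2]; push_cast; ring_nf

def gaussTerm (Q : ℕ) [NeZero Q] (a b : ZMod Q) (k : ℕ) : ℂ :=
  ZMod.stdAddChar (a * (k : ZMod Q) + b * (k : ZMod Q) ^ 2)

def driftPhase (N : ℕ) (d₁ d₂ : ℝ) (k : ℕ) : ℝ := k * d₁ / N + k ^ 2 * d₂ / N ^ 2

theorem Fsum_eq_sum_driftPhase_mul_gaussTerm (N Q : ℕ) [NeZero Q] (a b : ℤ) (p : ℝ × ℝ) :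
    Fsum N p = ∑ k ∈ range N, e2 (driftPhase N (p.1 - a / Q * N) (p.2 - b / Q * N ^ 2) (k + 1)) *
      gaussTerm Q a b (k + 1) := by
  have hQ : (Q : ℝ) ≠ 0 := Nat.cast_ne_zero.mpr (NeZero.ne Q)
  rw [Fsum, ← Finset.Ico_add_one_right_eq_Icc, sum_Ico_eq_sum_range, Nat.add_sub_cancel]
  refine sum_congr rfl fun k hk => ?_
  have hN : (N : ℝ) ≠ 0 := Nat.cast_ne_zero.mpr (by simp at hk; omega)
  have hcast : (a * ((k + 1 : ℕ) : ZMod Q) + b * ((k + 1 : ℕ) : ZMod Q) ^ 2 : ZMod Q)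
      = ((a * (k + 1) + b * (k + 1) ^ 2 : ℤ) : ZMod Q) := by push_cast; ring
  rw [gaussTerm, hcast, ← e2_intCast_div, ← e2_add, add_comm 1 k, driftPhase]
  congr 1
  push_cast
  field_simp
  ring

section Drift

variable {N : ℕ} {d₁ d₂ δ : ℝ} (hN : 0 < N) (hd₁ : |d₁| ≤ δ) (hd₂ : |d₂| ≤ δ)
include hN hd₁ hd₂

theorem abs_driftPhase_succ_sub_le {j : ℕ} (hj : j ≤ N) :
    |driftPhase N d₁ d₂ (j + 1) - driftPhase N d₁ d₂ j| ≤ 4 * δ / N := by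
  have hN' : (0 : ℝ) < N := by exact_mod_cast hN
  have hj' : (2 * j + 1 : ℝ) ≤ 3 * N := by
    have : (j : ℝ) ≤ N := by exact_mod_cast hj
    have : (1 : ℝ) ≤ N := by exact_mod_cast hN
    linarith
  have h : driftPhase N d₁ d₂ (j + 1) - driftPhase N d₁ d₂ j
      = d₁ / N + (2 * j + 1) / N * d₂ / N := by
    simp only [driftPhase]; push_cast; field_simp; ring
  have h3 : (2 * j + 1 : ℝ) / N ≤ 3 := by rwa [div_le_iff₀ hN']
  calc |driftPhase N d₁ d₂ (j + 1) - driftPhase N d₁ d₂ j|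
      ≤ |d₁ / N| + |(2 * j + 1) / N * d₂ / N| := h ▸ abs_add_le _ _
    _ = (|d₁| + (2 * j + 1) / N * |d₂|) / N := by
        rw [abs_div, abs_div, abs_mul, abs_of_pos hN',
          abs_of_nonneg (by positivity : (0 : ℝ) ≤ (2 * j + 1) / N)]
        ring
    _ ≤ (δ + 3 * δ) / N := by gcongr
    _ = 4 * δ / N := by ring

theorem abs_driftPhase_le {j : ℕ} (hj : j ≤ 2 * N) : |driftPhase N d₁ d₂ j| ≤ 6 * δ := by
  have hN' : (0 : ℝ) < N := by exact_mod_cast hN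
  have hu : (j : ℝ) / N ≤ 2 := by
    rw [div_le_iff₀ hN']; exact_mod_cast hj
  have h : driftPhase N d₁ d₂ j = j / N * d₁ + (j / N) ^ 2 * d₂ := by
    simp only [driftPhase]; ring
  have hu0 : 0 ≤ (j : ℝ) / N := by positivity
  calc |driftPhase N d₁ d₂ j| ≤ |j / N * d₁| + |(j / N) ^ 2 * d₂| := h ▸ abs_add_le _ _
    _ = j / N * |d₁| + (j / N) ^ 2 * |d₂| := by
        rw [abs_mul, abs_mul, abs_of_nonneg hu0, abs_pow, abs_of_nonneg hu0]
    _ ≤ 2 * δ + 2 ^ 2 * δ := by gcongr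
    _ = 6 * δ := by ring

theorem norm_e2_driftPhase_variation_le :
    ‖e2 (driftPhase N d₁ d₂ (N + 1)) - 1‖
      + ∑ k ∈ range N, ‖e2 (driftPhase N d₁ d₂ (k + 2)) - e2 (driftPhase N d₁ d₂ (k + 1))‖
      ≤ 20 * π * δ := by
  have hlast : ‖e2 (driftPhase N d₁ d₂ (N + 1)) - 1‖ ≤ 2 * π * (6 * δ) :=
    (norm_e2_sub_one_le _).trans <| by
      gcongr; exact abs_driftPhase_le hN hd₁ hd₂ (by omega)
  have hstep : ∀ k ∈ range N,
      ‖e2 (driftPhase N d₁ d₂ (k + 2)) - e2 (driftPhase N d₁ d₂ (k + 1))‖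
        ≤ 2 * π * (4 * δ / N) := fun k hk =>
    (norm_e2_sub_e2_le _ _).trans <| by
      gcongr; exact abs_driftPhase_succ_sub_le hN hd₁ hd₂ (mem_range.mp hk)
  have hsum := sum_le_sum hstep
  rw [sum_const, card_range, nsmul_eq_mul] at hsum
  have hN' : (N : ℝ) ≠ 0 := by positivity
  have : (N : ℝ) * (2 * π * (4 * δ / N)) = 2 * π * (4 * δ) := by field_simp
  linarith

theorem norm_sum_e2_driftPhase_mul_sub_le {c : ℕ → ℂ} {B : ℝ}
    (hB : ∀ n ≤ N, ‖∑ k ∈ range n, c k‖ ≤ B) :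
    ‖∑ k ∈ range N, e2 (driftPhase N d₁ d₂ (k + 1)) * c k - ∑ k ∈ range N, c k‖
      ≤ B * (20 * π * δ) := by
  have habel := norm_sum_range_smul_le (fun k => e2 (driftPhase N d₁ d₂ (k + 1)) - 1) c N hB
  simp only [smul_eq_mul, sub_sub_sub_cancel_right, sub_one_mul, sum_sub_distrib] at habel
  exact habel.trans (mul_le_mul_of_nonneg_left (norm_e2_driftPhase_variation_le hN hd₁ hd₂)
    ((norm_nonneg _).trans (hB 0 (Nat.zero_le N))))

end Drift

section Gauss

variable {Q : ℕ} [NeZero Q] (a b : ZMod Q)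

theorem norm_gaussTerm (k : ℕ) : ‖gaussTerm Q a b k‖ = 1 := AddChar.norm_apply _ _

theorem periodic_gaussTerm_succ : Function.Periodic (fun k => gaussTerm Q a b (k + 1)) Q := by
  intro k; simp [gaussTerm]

theorem sum_range_gaussTerm_succ :
    ∑ k ∈ range Q, gaussTerm Q a b (k + 1)
      = ∑ x : ZMod Q, ZMod.stdAddChar (a * x + b * x ^ 2) := by
  rw [← Equiv.sum_comp (Equiv.addRight (1 : ZMod Q)), ← ZMod.sum_range_natCast]
  simp [gaussTerm]

variable {b} (hb : IsUnit (2 * b))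
include hb

theorem norm_sum_range_gaussTerm_succ : ‖∑ k ∈ range Q, gaussTerm Q a b (k + 1)‖ = √Q := by
  rw [sum_range_gaussTerm_succ, ← Real.sqrt_sq (norm_nonneg _),
    AddChar.norm_sum_quadratic_sq (ZMod.isPrimitive_stdAddChar Q) a b hb, ZMod.card]

theorem abs_norm_sum_range_gaussTerm_succ_sub_le (n : ℕ) :
    |‖∑ k ∈ range n, gaussTerm Q a b (k + 1)‖ - ((n / Q : ℕ) + 1 / 2) * √Q| ≤ Q / 2 := by
  have h := (periodic_gaussTerm_succ a b).norm_sum_range_sub_le (NeZero.pos Q)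
    (fun k => (norm_gaussTerm a b _).le) n
  rw [← norm_sum_range_gaussTerm_succ a hb,
    ← Real.norm_of_nonneg (by positivity : (0 : ℝ) ≤ (n / Q : ℕ) + 1 / 2), ← norm_smul]
  exact (abs_norm_sub_norm_le _ _).trans h

end Gauss

/-- Here `m = ⌊N/q⌋`, `x = √q` and `T = N/√q`. The slack `1 / x`, which comes from
`N < q (m + 1)`, is what makes the lower bound hold for small `q`. -/
theorem quarter_le_and_le_four_mul {F P T x m : ℝ} (hx1 : 1 ≤ x) (hT : x ^ 2 ≤ T)
    (hm : m * x ≤ T) (hm' : T + 1 / x ≤ (m + 1) * x) (hP : |P - (m + 1 / 2) * x| ≤ x ^ 2 / 2)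
    (hF : |F - P| ≤ T / 50) : T / 4 ≤ F ∧ F ≤ 4 * T := by
  have hx0 : 0 < x := by linarith
  have hpoly : x ^ 2 / 2 + x / 2 - 1 / x ≤ (3 / 4 - 1 / 50) * x ^ 2 := by
    rw [← sub_nonneg]
    have : (3 / 4 - 1 / 50) * x ^ 2 - (x ^ 2 / 2 + x / 2 - 1 / x)
        = (23 * x ^ 3 - 50 * x ^ 2 + 100) / (100 * x) := by field_simp; ring
    rw [this]
    apply div_nonneg _ (by positivity)
    nlinarith [sq_nonneg (x - 3 / 2)]
  obtain ⟨hP1, hP2⟩ := abs_le.mp hP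
  obtain ⟨hF1, hF2⟩ := abs_le.mp hF
  constructor <;> nlinarith

theorem norm_sum_e2_driftPhase_mul_gaussTerm_bounds {N Q : ℕ} [NeZero Q] {a b : ZMod Q}
    (hb : IsUnit (2 * b)) (hQN : Q * √Q ≤ N) {d₁ d₂ : ℝ} (hd₁ : |d₁| ≤ (10 ^ 10)⁻¹)
    (hd₂ : |d₂| ≤ (10 ^ 10)⁻¹) :
    N / √Q / 4 ≤ ‖∑ k ∈ range N, e2 (driftPhase N d₁ d₂ (k + 1)) * gaussTerm Q a b (k + 1)‖ ∧
      ‖∑ k ∈ range N, e2 (driftPhase N d₁ d₂ (k + 1)) * gaussTerm Q a b (k + 1)‖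
        ≤ 4 * (N / √Q) := by
  have hP := abs_norm_sum_range_gaussTerm_succ_sub_le a hb
  have hQ1 : (1 : ℝ) ≤ Q := by exact_mod_cast NeZero.one_le
  have hx1 : 1 ≤ √(Q : ℝ) := Real.one_le_sqrt.mpr hQ1
  have hxx : √(Q : ℝ) ^ 2 = Q := Real.sq_sqrt (by linarith)
  generalize √(Q : ℝ) = x at *
  have hx0 : 0 < x := by linarith
  have hN : 0 < N := by
    have : (0 : ℝ) < N := lt_of_lt_of_le (by positivity) hQN
    exact_mod_cast this
  have hdiv : ∀ n : ℕ, (n / Q : ℕ) * x ≤ n / x := fun n => by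
    rw [le_div_iff₀ hx0, mul_assoc, ← sq, hxx]
    exact_mod_cast Nat.div_mul_le_self n Q
  have hdiv_succ : N / x + 1 / x ≤ ((N / Q : ℕ) + 1) * x := by
    rw [← add_div, div_le_iff₀ hx0, mul_assoc, ← sq, hxx]
    exact_mod_cast (show N + 1 ≤ (N / Q + 1) * Q by
      rw [mul_comm]; exact Nat.lt_mul_div_succ N (NeZero.pos Q))
  have hB : ∀ n ≤ N, ‖∑ k ∈ range n, gaussTerm Q a b (k + 1)‖ ≤ 2 * (N / x) := fun n hn => by
    have h1 := (abs_le.mp (hP n)).2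
    have h2 : (n / Q : ℕ) * x ≤ N / x :=
      (hdiv n).trans (div_le_div_of_nonneg_right (by exact_mod_cast hn) hx0.le)
    have h3 : (Q : ℝ) ≤ N / x := by rw [le_div_iff₀ hx0]; exact hQN
    have h4 : x ≤ Q := by nlinarith
    linarith
  have hE : |‖∑ k ∈ range N, e2 (driftPhase N d₁ d₂ (k + 1)) * gaussTerm Q a b (k + 1)‖
      - ‖∑ k ∈ range N, gaussTerm Q a b (k + 1)‖| ≤ N / x / 50 := by
    refine (abs_norm_sub_norm_le _ _).trans
      ((norm_sum_e2_driftPhase_mul_sub_le hN hd₁ hd₂ hB).trans ?_)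
    nlinarith [pi_lt_four, (by positivity : 0 ≤ N / x)]
  refine quarter_le_and_le_four_mul hx1 ?_ (hdiv N) hdiv_succ ?_ hE
  · rw [le_div_iff₀ hx0, hxx]; exact hQN
  · rw [hxx]; exact hP N

theorem mul_sqrt_le_of_le_rpow_two_thirds {q N : ℝ} (hq : 0 ≤ q) (hN : 0 ≤ N)
    (h : q ≤ N ^ (2 / 3 : ℝ)) : q * √q ≤ N := by
  have h1 : q ^ (3 / 2 : ℝ) ≤ (N ^ (2 / 3 : ℝ)) ^ (3 / 2 : ℝ) :=
    Real.rpow_le_rpow hq h (by norm_num)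
  rwa [← Real.rpow_mul hN, show (2 / 3 : ℝ) * (3 / 2) = 1 by norm_num, Real.rpow_one,
    show (3 / 2 : ℝ) = 1 + 1 / 2 by norm_num, Real.rpow_add' hq (by norm_num), Real.rpow_one,
    ← Real.sqrt_eq_rpow] at h1

theorem statement8_general (N : ℕ) (q a b : ℤ) (h : condQAB (N : ℝ) q a b) :
    ∀ p ∈ Mqab (N : ℝ) q a b,
      (N : ℝ) * (q : ℝ) ^ (-(1/2) : ℝ) / 4 ≤ ‖Fsum N p‖ ∧
      ‖Fsum N p‖ ≤ 4 * ((N : ℝ) * (q : ℝ) ^ (-(1/2) : ℝ)) := by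
  obtain ⟨hodd, hb1, hbq, hqN, hgcd, -, -⟩ := h
  rintro p ⟨-, hd₁, hd₂⟩
  lift q to ℕ using by omega
  lift b to ℕ using by omega
  have : NeZero q := ⟨by omega⟩
  have hunit : IsUnit (2 * (b : ZMod q)) := by
    have h2 : IsUnit ((2 : ℕ) : ZMod q) :=
      (ZMod.isUnit_iff_coprime 2 q).mpr (Nat.coprime_two_left.mpr (Int.odd_coe_nat q |>.mp hodd))
    simpa using h2.mul ((ZMod.isUnit_iff_coprime b q).mpr hgcd)
  rw [Int.cast_natCast] at hqN
  have hcube := mul_sqrt_le_of_le_rpow_two_thirds (Nat.cast_nonneg q) (Nat.cast_nonneg N) hqN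
  rw [Fsum_eq_sum_driftPhase_mul_gaussTerm N q a b p, Int.cast_natCast,
    Real.rpow_neg (Nat.cast_nonneg _), ← Real.sqrt_eq_rpow, ← div_eq_mul_inv]
  simp only [Int.cast_natCast] at hd₁ hd₂ ⊢
  exact norm_sum_e2_driftPhase_mul_gaussTerm_bounds hunit hcube hd₁ hd₂

/-- On each major arc box `M(q,a,b)`, `|F| ∼ N q^{-1/2}` within a factor of `4`. -/
theorem statement8 (N : ℕ) (hN : 1 ≤ N) (q a b : ℤ) (h : condQAB (N : ℝ) q a b) :
    ∀ p ∈ Mqab (N : ℝ) q a b,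
      (N : ℝ) * (q : ℝ) ^ (-(1/2) : ℝ) / 4 ≤ ‖Fsum N p‖ ∧
      ‖Fsum N p‖ ≤ 4 * ((N : ℝ) * (q : ℝ) ^ (-(1/2) : ℝ)) :=
  statement8_general N q a b h

end
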